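/- Walk-set monotonicity under path extension: let P = ⟨v, …, t⟩ be a simple path ending at t and let P_e = ⟨u, v, …, t⟩ be a simple path extending P by one additional initial vertex u (so that ⟨u,v⟩ ∈ E and u does not occur in P). Then every walk associated with P_e whose certifying suffix, after loop erasure, equals P_e, contains a (shorter) suffix witnessing association with P; consequently W_G^{P_e} ⊆ W_G^{P}. -/

import Mathlib

variable {V : Type*}

/-- A walk in a directed graph with edge relation `E`: a nonempty vertex list
with every consecutive pair an edge. -/
def IsWalk (E : V → V → Prop) (W : List V) : Prop :=
  W ≠ [] ∧ W.Chain' E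

/-- A simple path: a walk with no repeated vertices. -/
def IsSimplePath (E : V → V → Prop) (P : List V) : Prop :=
  IsWalk E P ∧ P.Nodup

/-- `(a,b)` occurs as a consecutive pair (an edge) of the path `P`. -/
def edgeIn (P : List V) (a b : V) : Prop :=
  (a, b) ∈ P.zip P.tail

/-- Admissible step w.r.t. `P`: a repeated vertex, or exactly one of the
forward/backward edges occurs in `P`. -/
def PStep (P : List V) (a b : V) : Prop :=
  a = b ∨ Xor' (edgeIn P a b) (edgeIn P b a)

/-- Loop erasure: repeatedly delete the cycle at the first repeated vertex. -/
def loopErase [DecidableEq V] : List V → List V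
  | [] => []
  | v :: l =>
    if h : v ∈ l then loopErase (v :: l.drop (l.idxOf v + 1))
    else v :: loopErase l
termination_by l => l.length
decreasing_by
  · have h1 : l.idxOf v < l.length := List.idxOf_lt_length_iff.mpr h
    simp only [List.length_cons, List.length_drop]
    omega
  · simp

/-- `S` is a suffix certifying association with the simple path `P` ending at `t`:
it starts at the first vertex of `P`, ends at `t`, has no intermediate occurrence
of `t`, all of its steps are admissible w.r.t. `P`, and its loop erasure is `P`. -/
def Certifies [DecidableEq V] (P S : List V) (t : V) : Prop :=
  S ≠ [] ∧ S.head? = P.head? ∧ S.getLast? = some t ∧ t ∉ S.dropLast ∧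
  S.Chain' (PStep P) ∧ loopErase S = P

/-- A walk `W` is associated with the simple path `P` ending at `t`. -/
def AssocWalk [DecidableEq V] (E : V → V → Prop) (P W : List V) (t : V) : Prop :=
  IsWalk E W ∧ ∃ S, S <:+ W ∧ Certifies P S t

/- Loop erasure keeps the first vertex `u` of `S` and continues from the suffix after the last
visit to `u`; its remaining vertices are the loop erasure of that suffix. So a walk certifying
`u :: P` has a suffix, starting right after its last `u`, that certifies `P`. Steps of that
suffix avoid `u`, so they stay admissible once the edge `⟨u, v⟩` is removed from the path. -/

theorem loopErase_head? [DecidableEq V] (l : List V) : (loopErase l).head? = l.head? := by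
  induction l using loopErase.induct with
  | case1 => rw [loopErase]
  | case2 v l hv ih => rw [loopErase, dif_pos hv, ih]; rfl
  | case3 v l hv ih => rw [loopErase, dif_neg hv]; rfl

theorem exists_cons_suffix_of_loopErase_eq_cons [DecidableEq V] {S m : List V} {u : V}
    (h : loopErase S = u :: m) : ∃ S₂, u :: S₂ <:+ S ∧ u ∉ S₂ ∧ loopErase S₂ = m := by
  induction S using loopErase.induct with
  | case1 => simp [loopErase] at h
  | case2 v l hv ih =>
    rw [loopErase, dif_pos hv] at h
    obtain ⟨S₂, hsuf, hu, hle⟩ := ih h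
    refine ⟨S₂, hsuf.trans ?_, hu, hle⟩
    have hidx : l.idxOf v < l.length := List.idxOf_lt_length_iff.mpr hv
    have hdrop : v :: l.drop (l.idxOf v + 1) = l.drop (l.idxOf v) := by
      rw [List.drop_eq_getElem_cons hidx, List.getElem_idxOf hidx]
    rw [hdrop]
    exact (List.drop_suffix _ _).trans (List.suffix_cons v l)
  | case3 v l hv ih =>
    rw [loopErase, dif_neg hv, List.cons.injEq] at h
    obtain ⟨rfl, rfl⟩ := h
    exact ⟨l, List.suffix_refl _, hv, rfl⟩

theorem edgeIn_cons {u a b : V} {P : List V} :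
    edgeIn (u :: P) a b ↔ (a = u ∧ P.head? = some b) ∨ edgeIn P a b := by
  cases P <;> simp [edgeIn, Prod.ext_iff, eq_comm]

theorem PStep.of_cons {u a b : V} {P : List V} (ha : a ≠ u) (hb : b ≠ u)
    (h : PStep (u :: P) a b) : PStep P a b := by
  simpa only [PStep, edgeIn_cons, ha, hb, false_and, false_or] using h

theorem Certifies.exists_suffix_of_cons [DecidableEq V] {P S : List V} {u t : V}
    (hS : Certifies (u :: P) S t) (hP : P ≠ []) : ∃ S₂, S₂ <:+ S ∧ Certifies P S₂ t := by
  obtain ⟨-, -, hlast, hdl, hchain, hle⟩ := hS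
  obtain ⟨S₂, ⟨A, rfl⟩, hu, hle₂⟩ := exists_cons_suffix_of_loopErase_eq_cons hle
  have hS₂ : S₂ ≠ [] := by rintro rfl; exact hP (by rw [← hle₂, loopErase])
  have hsplit : A ++ u :: S₂ = (A ++ [u]) ++ S₂ := by simp
  rw [hsplit] at hlast hdl hchain ⊢
  rw [List.getLast?_append_of_ne_nil _ hS₂] at hlast
  rw [List.dropLast_append_of_ne_nil hS₂] at hdl
  refine ⟨S₂, List.suffix_append _ _, hS₂, by rw [← hle₂, loopErase_head?], hlast,
    fun h ↦ hdl (List.mem_append_right _ h), ?_, hle₂⟩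
  exact (hchain.suffix (List.suffix_append _ _)).imp_of_mem_imp fun a b ha hb ↦
    PStep.of_cons (ne_of_mem_of_not_mem ha hu) (ne_of_mem_of_not_mem hb hu)

theorem assocWalks_subset_of_extension_general {V : Type*} [DecidableEq V]
    (E : V → V → Prop) (P : List V) (u t : V)
    (hP : IsSimplePath E P) :
    {W : List V | AssocWalk E (u :: P) W t} ⊆ {W : List V | AssocWalk E P W t} := by
  rintro W ⟨hW, S, hSW, hS⟩
  obtain ⟨S₂, hS₂S, hS₂⟩ := hS.exists_suffix_of_cons hP.1.1
  exact ⟨hW, S₂, hS₂S.trans hSW, hS₂⟩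

/-- walk-set monotonicity under one-step path extension:
if `P` is a simple path ending at `t` and `Pₑ = u :: P` is a simple path
extending `P` by a new initial vertex `u` (so `⟨u, head P⟩ ∈ E` and `u ∉ P`),
then every walk associated with `Pₑ` is also associated with `P`;
i.e. `W_G^{Pₑ} ⊆ W_G^{P}`. -/
theorem assocWalks_subset_of_extension {V : Type*} [DecidableEq V]
    (E : V → V → Prop) (P : List V) (u t : V)
    (hP : IsSimplePath E P) (ht : P.getLast? = some t)
    (hPe : IsSimplePath E (u :: P)) :
    {W : List V | AssocWalk E (u :: P) W t} ⊆ {W : List V | AssocWalk E P W t} :=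
  assocWalks_subset_of_extension_general E P u t hP
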